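/- arXiv:0803.2502 — 3 statements merged into one kernel-verified Lean document; each statement's English description precedes it below -/
import Mathlib

section
/- Let Q be a closed quadratic form on a Hilbert space H, bounded below by λ₀‖ω‖², with associated self-adjoint operator A and spectral projections E(λ). Let J, J' be bounded self-adjoint operators with 0 ≤ J ≤ id, J² + (J')² = id, both preserving D(Q), such that Q(Jω) + Q(J'ω) - Q(ω) ≤ γ‖ω‖² for all ω ∈ D(Q), and Q(J'ω) ≥ α‖J'ω‖² for all ω ∈ D(Q) with α > 0. If α > λ + γ, then ‖J E(λ)ω‖² ≥ ((α - λ - γ)/(α - λ₀)) ‖E(λ)ω‖² for all ω ∈ H. -/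
/-!
If `φ = E(λ)ω`, then `Q φ ≤ λ‖φ‖²`. The IMS bound and the lower bounds on `Q ∘ J` and `Q ∘ J'` give
`λ₀‖Jφ‖² + α‖J'φ‖² ≤ Q(Jφ) + Q(J'φ) ≤ (λ + γ)‖φ‖²`, and the partition of unity `J² + J'² = 1`
turns `‖J'φ‖²` into `‖φ‖² - ‖Jφ‖²`; solving for `‖Jφ‖²` uses only `α - λ₀ > 0`.
-/

open ContinuousLinearMap

theorem IsSelfAdjoint.norm_sq_add_norm_sq_of_comp_add_comp_eq_one {𝕜 H : Type*} [RCLike 𝕜]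
    [NormedAddCommGroup H] [InnerProductSpace 𝕜 H] [CompleteSpace H] {J J' : H →L[𝕜] H}
    (hJ : IsSelfAdjoint J) (hJ' : IsSelfAdjoint J') (hsum : J ∘L J + J' ∘L J' = 1) (x : H) :
    ‖J x‖ ^ 2 + ‖J' x‖ ^ 2 = ‖x‖ ^ 2 := by
  have hT {T : H →L[𝕜] H} (hT : IsSelfAdjoint T) : inner 𝕜 (T (T x)) x = (‖T x‖ ^ 2 : 𝕜) := by
    rw [hT.isSymmetric.apply_clm, inner_self_eq_norm_sq_to_K]
  have h : inner 𝕜 ((J ∘L J + J' ∘L J') x) x = inner 𝕜 x x := by rw [hsum, one_apply_eq_self]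
  rw [add_apply, comp_apply, comp_apply, inner_add_left, hT hJ, hT hJ',
    inner_self_eq_norm_sq_to_K] at h
  exact_mod_cast h

theorem sub_mul_norm_sq_le_mul_norm_sq_of_ims {H : Type*} [NormedAddCommGroup H]
    [InnerProductSpace ℝ H] [CompleteSpace H] {Q : H → ℝ} {D : Set H} {lam0 gam alpha lam : ℝ}
    {J J' : H →L[ℝ] H} (hJsa : IsSelfAdjoint J) (hJ'sa : IsSelfAdjoint J')
    (hsum : J ∘L J + J' ∘L J' = 1) (hQlb : ∀ ω ∈ D, lam0 * ‖ω‖ ^ 2 ≤ Q ω)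
    (hJD : ∀ ω ∈ D, J ω ∈ D) (hIMS : ∀ ω ∈ D, Q (J ω) + Q (J' ω) - Q ω ≤ gam * ‖ω‖ ^ 2)
    (hJ'lb : ∀ ω ∈ D, alpha * ‖J' ω‖ ^ 2 ≤ Q (J' ω)) {φ : H} (hφ : φ ∈ D)
    (hQφ : Q φ ≤ lam * ‖φ‖ ^ 2) :
    (alpha - lam - gam) * ‖φ‖ ^ 2 ≤ (alpha - lam0) * ‖J φ‖ ^ 2 := by
  linear_combination hQlb _ (hJD _ hφ) + hJ'lb _ hφ + hIMS _ hφ + hQφ -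
    alpha * hJsa.norm_sq_add_norm_sq_of_comp_add_comp_eq_one hJ'sa hsum φ

theorem stmt0_general {H : Type*} [NormedAddCommGroup H] [InnerProductSpace ℝ H] [CompleteSpace H]
    (Q : H → ℝ) (D : Set H) (lam0 gam alpha lam : ℝ)
    -- Q is bounded below by λ₀ ≤ 0
    (hlam0 : lam0 ≤ 0)
    (hQlb : ∀ ω ∈ D, lam0 * ‖ω‖ ^ 2 ≤ Q ω)
    -- J, J' bounded self-adjoint, 0 ≤ J ≤ id, J² + (J')² = id
    (J J' : H →L[ℝ] H)
    (hJsa : IsSelfAdjoint J) (hJ'sa : IsSelfAdjoint J')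
    (hsum : J ∘L J + J' ∘L J' = 1)
    -- both preserve the form domain
    (hJD : ∀ ω ∈ D, J ω ∈ D)
    -- IMS-type defect bound
    (hIMS : ∀ ω ∈ D, Q (J ω) + Q (J' ω) - Q ω ≤ gam * ‖ω‖ ^ 2)
    -- ellipticity away from the critical set
    (halpha : 0 < alpha)
    (hJ'lb : ∀ ω ∈ D, alpha * ‖J' ω‖ ^ 2 ≤ Q (J' ω))
    -- E λ is the spectral projection of the associated operator onto (−∞, λ]:
    -- it maps into the form domain and satisfies the basic spectral estimate
    (E : ℝ → H →L[ℝ] H)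
    (hED : ∀ μ : ℝ, ∀ ω : H, E μ ω ∈ D)
    (hEQ : ∀ μ : ℝ, ∀ ω : H, Q (E μ ω) ≤ μ * ‖E μ ω‖ ^ 2) :
    ∀ ω : H, ((alpha - lam - gam) / (alpha - lam0)) * ‖E lam ω‖ ^ 2 ≤ ‖J (E lam ω)‖ ^ 2 := by
  intro ω
  have hden : 0 < alpha - lam0 := by linarith
  rw [div_mul_eq_mul_div, div_le_iff₀ hden, mul_comm _ (alpha - lam0)]
  exact sub_mul_norm_sq_le_mul_norm_sq_of_ims hJsa hJ'sa hsum hQlb hJD hIMS hJ'lb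
    (hED lam ω) (hEQ lam ω)

/-- Localization estimate for spectral projections of the operator associated to a
closed bounded-below quadratic form `Q`: if `α > λ + γ`, then
`‖J E(λ)ω‖² ≥ ((α − λ − γ)/(α − λ₀)) ‖E(λ)ω‖²` for all ω. -/
theorem stmt0 {H : Type*} [NormedAddCommGroup H] [InnerProductSpace ℝ H] [CompleteSpace H]
    (Q : H → ℝ) (D : Set H) (lam0 gam alpha lam : ℝ)
    -- Q is bounded below by λ₀ ≤ 0
    (hlam0 : lam0 ≤ 0)
    (hQlb : ∀ ω ∈ D, lam0 * ‖ω‖ ^ 2 ≤ Q ω)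
    -- J, J' bounded self-adjoint, 0 ≤ J ≤ id, J² + (J')² = id
    (J J' : H →L[ℝ] H)
    (hJsa : IsSelfAdjoint J) (hJ'sa : IsSelfAdjoint J')
    (hJpos : ∀ ω : H, (0:ℝ) ≤ inner ℝ (J ω) ω)
    (hJle : ∀ ω : H, (inner ℝ (J ω) ω : ℝ) ≤ ‖ω‖ ^ 2)
    (hsum : J ∘L J + J' ∘L J' = 1)
    -- both preserve the form domain
    (hJD : ∀ ω ∈ D, J ω ∈ D) (hJ'D : ∀ ω ∈ D, J' ω ∈ D)
    -- IMS-type defect bound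
    (hgam : 0 ≤ gam)
    (hIMS : ∀ ω ∈ D, Q (J ω) + Q (J' ω) - Q ω ≤ gam * ‖ω‖ ^ 2)
    -- ellipticity away from the critical set
    (halpha : 0 < alpha)
    (hJ'lb : ∀ ω ∈ D, alpha * ‖J' ω‖ ^ 2 ≤ Q (J' ω))
    -- E λ is the spectral projection of the associated operator onto (−∞, λ]:
    -- it maps into the form domain and satisfies the basic spectral estimate
    (E : ℝ → H →L[ℝ] H)
    (hED : ∀ μ : ℝ, ∀ ω : H, E μ ω ∈ D)
    (hEQ : ∀ μ : ℝ, ∀ ω : H, Q (E μ ω) ≤ μ * ‖E μ ω‖ ^ 2)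
    (hcond : alpha > lam + gam) :
    ∀ ω : H, ((alpha - lam - gam) / (alpha - lam0)) * ‖E lam ω‖ ^ 2 ≤ ‖J (E lam ω)‖ ^ 2 :=
  stmt0_general Q D lam0 gam alpha lam hlam0 hQlb J J' hJsa hJ'sa hsum hJD hIMS halpha hJ'lb E hED
    hEQ
end

section
/- Under the hypotheses of the localization proposition, if α > λ + γ then Q(J E(λ)ω) ≤ (λ + γ - λ₀(λ + γ - λ₀)/(α - λ₀)) ‖E(λ)ω‖² for all ω ∈ H. -/
open ContinuousLinearMap

/-! Write `η = E(λ)ω`. Since `J² + J'² = 1`, the mass of `η` splits as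
`‖Jη‖² + ‖J'η‖² = ‖η‖²`, and the IMS bound together with `Q(η) ≤ λ‖η‖²` gives
`Q(Jη) + Q(J'η) ≤ (λ + γ)‖η‖²`. Bounding `Q(Jη)` below by `λ₀‖Jη‖²` and `Q(J'η)` below by
`α‖J'η‖²` shows that only the fraction `(λ + γ - λ₀)/(α - λ₀)` of the mass can sit on `J'η`;
then `Q(Jη) ≤ (λ + γ)‖η‖² - λ₀‖J'η‖²` and `λ₀ ≤ 0` give the claim. -/

theorem norm_sq_add_norm_sq_of_comp_self_add_comp_self_eq_one {𝕜 E : Type*} [RCLike 𝕜]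
    [NormedAddCommGroup E] [InnerProductSpace 𝕜 E] [CompleteSpace E] {A B : E →L[𝕜] E}
    (hA : IsSelfAdjoint A) (hB : IsSelfAdjoint B) (h : A ∘L A + B ∘L B = 1) (x : E) :
    ‖A x‖ ^ 2 + ‖B x‖ ^ 2 = ‖x‖ ^ 2 := by
  rw [apply_norm_sq_eq_inner_adjoint_left, apply_norm_sq_eq_inner_adjoint_left, hA.adjoint_eq,
    hB.adjoint_eq, ← map_add, ← inner_add_left, ← add_apply, h, one_apply_eq_self,
    inner_self_eq_norm_sq]

section LocalizationArithmetic

variable {H : Type*} [NormedAddCommGroup H] {Q : H → ℝ} {x y z : H} {lam0 alpha mu : ℝ}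

theorem norm_sq_le_of_form_add_form_le (hlt : lam0 < alpha)
    (hnorm : ‖x‖ ^ 2 + ‖y‖ ^ 2 = ‖z‖ ^ 2) (hQ : Q x + Q y ≤ mu * ‖z‖ ^ 2)
    (hx : lam0 * ‖x‖ ^ 2 ≤ Q x) (hy : alpha * ‖y‖ ^ 2 ≤ Q y) :
    ‖y‖ ^ 2 ≤ (mu - lam0) / (alpha - lam0) * ‖z‖ ^ 2 := by
  rw [div_mul_eq_mul_div, le_div_iff₀ (sub_pos.mpr hlt)]
  linear_combination hQ + hx + hy - lam0 * hnorm

theorem form_le_of_form_add_form_le (hlam0 : lam0 ≤ 0) (hlt : lam0 < alpha)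
    (hnorm : ‖x‖ ^ 2 + ‖y‖ ^ 2 = ‖z‖ ^ 2) (hQ : Q x + Q y ≤ mu * ‖z‖ ^ 2)
    (hx : lam0 * ‖x‖ ^ 2 ≤ Q x) (hy : alpha * ‖y‖ ^ 2 ≤ Q y) :
    Q x ≤ (mu - lam0 * ((mu - lam0) / (alpha - lam0))) * ‖z‖ ^ 2 := by
  have hmass := norm_sq_le_of_form_add_form_le hlt hnorm hQ hx hy
  have hy' : lam0 * ‖y‖ ^ 2 ≤ Q y :=
    (mul_le_mul_of_nonneg_right hlt.le (sq_nonneg ‖y‖)).trans hy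
  linarith [mul_le_mul_of_nonpos_left hmass hlam0]

end LocalizationArithmetic

theorem stmt2_general {H : Type*} [NormedAddCommGroup H] [InnerProductSpace ℝ H] [CompleteSpace H]
    (Q : H → ℝ) (D : Set H) (lam0 gam alpha lam : ℝ)
    -- Q is bounded below by λ₀ ≤ 0
    (hlam0 : lam0 ≤ 0)
    (hQlb : ∀ ω ∈ D, lam0 * ‖ω‖ ^ 2 ≤ Q ω)
    -- J, J' bounded self-adjoint, 0 ≤ J ≤ id, J² + (J')² = id
    (J J' : H →L[ℝ] H)
    (hJsa : IsSelfAdjoint J) (hJ'sa : IsSelfAdjoint J')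
    (hsum : J ∘L J + J' ∘L J' = 1)
    -- both preserve the form domain
    (hJD : ∀ ω ∈ D, J ω ∈ D)
    -- IMS-type defect bound
    (hIMS : ∀ ω ∈ D, Q (J ω) + Q (J' ω) - Q ω ≤ gam * ‖ω‖ ^ 2)
    -- ellipticity away from the critical set
    (halpha : 0 < alpha)
    (hJ'lb : ∀ ω ∈ D, alpha * ‖J' ω‖ ^ 2 ≤ Q (J' ω))
    -- E λ is the spectral projection of the associated operator onto (−∞, λ]:
    -- it maps into the form domain and satisfies the basic spectral estimate
    (E : ℝ → H →L[ℝ] H)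
    (hED : ∀ μ : ℝ, ∀ ω : H, E μ ω ∈ D)
    (hEQ : ∀ μ : ℝ, ∀ ω : H, Q (E μ ω) ≤ μ * ‖E μ ω‖ ^ 2) :
    ∀ ω : H, Q (J (E lam ω)) ≤ (lam + gam - lam0 * ((lam + gam - lam0) / (alpha - lam0))) * ‖E lam ω‖ ^ 2 := by
  intro ω
  have hη : E lam ω ∈ D := hED lam ω
  have hQ : Q (J (E lam ω)) + Q (J' (E lam ω)) ≤ (lam + gam) * ‖E lam ω‖ ^ 2 := by
    linarith [hIMS _ hη, hEQ lam ω]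
  exact form_le_of_form_add_form_le hlam0 (by linarith)
    (norm_sq_add_norm_sq_of_comp_self_add_comp_self_eq_one hJsa hJ'sa hsum _) hQ
    (hQlb _ (hJD _ hη)) (hJ'lb _ hη)

/-- Localization estimate for spectral projections of the operator associated to a
closed bounded-below quadratic form `Q`: if `α > λ + γ`, then
`‖J E(λ)ω‖² ≥ ((α − λ − γ)/(α − λ₀)) ‖E(λ)ω‖²` for all ω. -/
theorem stmt2 {H : Type*} [NormedAddCommGroup H] [InnerProductSpace ℝ H] [CompleteSpace H]
    (Q : H → ℝ) (D : Set H) (lam0 gam alpha lam : ℝ)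
    -- Q is bounded below by λ₀ ≤ 0
    (hlam0 : lam0 ≤ 0)
    (hQlb : ∀ ω ∈ D, lam0 * ‖ω‖ ^ 2 ≤ Q ω)
    -- J, J' bounded self-adjoint, 0 ≤ J ≤ id, J² + (J')² = id
    (J J' : H →L[ℝ] H)
    (hJsa : IsSelfAdjoint J) (hJ'sa : IsSelfAdjoint J')
    (hJpos : ∀ ω : H, (0:ℝ) ≤ inner ℝ (J ω) ω)
    (hJle : ∀ ω : H, (inner ℝ (J ω) ω : ℝ) ≤ ‖ω‖ ^ 2)
    (hsum : J ∘L J + J' ∘L J' = 1)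
    -- both preserve the form domain
    (hJD : ∀ ω ∈ D, J ω ∈ D) (hJ'D : ∀ ω ∈ D, J' ω ∈ D)
    -- IMS-type defect bound
    (hgam : 0 ≤ gam)
    (hIMS : ∀ ω ∈ D, Q (J ω) + Q (J' ω) - Q ω ≤ gam * ‖ω‖ ^ 2)
    -- ellipticity away from the critical set
    (halpha : 0 < alpha)
    (hJ'lb : ∀ ω ∈ D, alpha * ‖J' ω‖ ^ 2 ≤ Q (J' ω))
    -- E λ is the spectral projection of the associated operator onto (−∞, λ]:
    -- it maps into the form domain and satisfies the basic spectral estimate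
    (E : ℝ → H →L[ℝ] H)
    (hED : ∀ μ : ℝ, ∀ ω : H, E μ ω ∈ D)
    (hEQ : ∀ μ : ℝ, ∀ ω : H, Q (E μ ω) ≤ μ * ‖E μ ω‖ ^ 2)
    (hcond : alpha > lam + gam) :
    ∀ ω : H, Q (J (E lam ω)) ≤ (lam + gam - lam0 * ((lam + gam - lam0) / (alpha - lam0))) * ‖E lam ω‖ ^ 2 :=
  stmt2_general Q D lam0 gam alpha lam hlam0 hQlb J J' hJsa hJ'sa hsum hJD hIMS halpha hJ'lb E hED
    hEQ
end

section
/- Let f(x) = xₙ + f'(x') on the half-space ℝⁿ₋ = {xₙ ≤ 0} and let g = g_{nn}(0)dxₙ² + g'(x') be a product metric with g_{nn}(0) > 0 and g' independent of xₙ. Then the Witten quadratic form separates: for a form ω = ω'(x') ∧ α(xₙ) with α a 1-form in dxₙ, Q_{h,f,g}(ω'∧α) = Q_{h,f',g'}(ω')·‖α‖² + ‖ω'‖²_{g'}·Q_{h,xₙ,g_{nn}(0)dxₙ²}(α). -/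
open MeasureTheory

/-- Separation of variables for the Witten quadratic form on the half-space
`ℝⁿ₋ = ℝ^{n−1} × (−∞,0]` with `f(x) = xₙ + f'(x')` and product metric
`g = g_{nn}(0)dxₙ² + g'(x')` (here `c = g_{nn}(0)`, `Ginv x'` is the inverse tangential
metric `(g')^{lk}(x')`, and `vol x'` the tangential Riemannian density `√det g'`).
For a separable form `ω = ω'(x') ∧ α(xₙ)dxₙ` (tangential factor a 0-form), writing all
terms of `Q_{h,f,g}(ω) = h⁻¹(‖d_{h,f}ω‖² + ‖d*_{h,f,g}ω‖²)` in coordinates: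
`Q_{h,f,g}(ω'∧α) = Q_{h,f',g'}(ω')·‖α‖² + ‖ω'‖²_{g'}·Q_{h,xₙ,c·dxₙ²}(α)`. -/
theorem stmt14 {d : ℕ} (h c : ℝ) (hh : 0 < h) (hc : 0 < c)
    (f' : EuclideanSpace ℝ (Fin d) → ℝ) (hf' : ContDiff ℝ (⊤ : ℕ∞) f')
    (Ginv : EuclideanSpace ℝ (Fin d) → Matrix (Fin d) (Fin d) ℝ) (hGinv : Continuous Ginv)
    (vol : EuclideanSpace ℝ (Fin d) → ℝ) (hvol : Continuous vol) (hvolpos : ∀ x, 0 < vol x)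
    (ω' : EuclideanSpace ℝ (Fin d) → ℝ) (hω' : ContDiff ℝ (⊤ : ℕ∞) ω') (hω'c : HasCompactSupport ω')
    (α : ℝ → ℝ) (hα : ContDiff ℝ (⊤ : ℕ∞) α) (hαc : HasCompactSupport α)
    (hαsupp : Function.support α ⊆ Set.Iic 0) :
    -- the Witten quadratic form of the product, evaluated on ω = ω'(x')·α(t)dxₙ:
    -- d_{h,f}ω has components (h∂ₗ + ∂ₗf')(ω'α) over dxₗ∧dxₙ (squared with the
    -- metric (g')^{lk}·c⁻¹), and d*_{h,f,g}ω = c⁻¹(−h∂ₜ + 1)(ω'α); the volume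
    -- density is vol·√c
    h⁻¹ * (∫ x, (∫ t in Set.Iic (0 : ℝ),
        ((∑ l, ∑ k, Ginv x l k *
            (h * fderiv ℝ (fun y => ω' y * α t) x (EuclideanSpace.single l 1)
              + fderiv ℝ f' x (EuclideanSpace.single l 1) * (ω' x * α t)) *
            (h * fderiv ℝ (fun y => ω' y * α t) x (EuclideanSpace.single k 1)
              + fderiv ℝ f' x (EuclideanSpace.single k 1) * (ω' x * α t))) * c⁻¹
          + (c⁻¹ * (-(h * deriv (fun s => ω' x * α s) t) + ω' x * α t)) ^ 2)
        * (vol x * Real.sqrt c)))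
    = (h⁻¹ * ∫ x, (∑ l, ∑ k, Ginv x l k *
          (h * fderiv ℝ ω' x (EuclideanSpace.single l 1)
            + fderiv ℝ f' x (EuclideanSpace.single l 1) * ω' x) *
          (h * fderiv ℝ ω' x (EuclideanSpace.single k 1)
            + fderiv ℝ f' x (EuclideanSpace.single k 1) * ω' x)) * vol x)
        * (∫ t in Set.Iic (0 : ℝ), (α t) ^ 2 * c⁻¹ * Real.sqrt c)
      + (∫ x, (ω' x) ^ 2 * vol x)
        * (h⁻¹ * ∫ t in Set.Iic (0 : ℝ),
            (c⁻¹ * (-(h * deriv α t) + α t)) ^ 2 * Real.sqrt c) := by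
  classical
  -- abbreviations
  set B : Fin d → EuclideanSpace ℝ (Fin d) → ℝ := fun l x =>
    h * fderiv ℝ ω' x (EuclideanSpace.single l 1)
      + fderiv ℝ f' x (EuclideanSpace.single l 1) * ω' x with hBdef
  set S : EuclideanSpace ℝ (Fin d) → ℝ := fun x =>
    ∑ l, ∑ k, Ginv x l k * B l x * B k x with hSdef
  set A : ℝ → ℝ := fun t => (c⁻¹ * (-(h * deriv α t) + α t)) ^ 2 with hAdef
  set I₁ : ℝ := ∫ t in Set.Iic (0 : ℝ), (α t) ^ 2 with hI1def
  set I₂ : ℝ := ∫ t in Set.Iic (0 : ℝ), A t with hI2def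
  -- continuity facts
  have hDc : Continuous fun x => fderiv ℝ ω' x := (hω'.fderiv_right (m := 0) (by simp)).continuous
  have hFc : Continuous fun x => fderiv ℝ f' x := (hf'.fderiv_right (m := 0) (by simp)).continuous
  have hBc : ∀ l, Continuous (B l) := fun l =>
    (continuous_const.mul (hDc.clm_apply continuous_const)).add
      ((hFc.clm_apply continuous_const).mul (hω'.continuous))
  have hGlk : ∀ l k, Continuous fun x => Ginv x l k := fun l k =>
    (continuous_apply k).comp ((continuous_apply l).comp hGinv)
  have hSc : Continuous S := by
    refine continuous_finset_sum _ fun l _ => continuous_finset_sum _ fun k _ => ?_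
    exact ((hGlk l k).mul (hBc l)).mul (hBc k)
  -- compact support facts
  have hB0 : ∀ (l) (x), x ∉ tsupport ω' → B l x = 0 := by
    intro l x hx
    have h0 : ω' x = 0 := image_eq_zero_of_notMem_tsupport hx
    have h1 : fderiv ℝ ω' x = 0 :=
      Function.notMem_support.mp fun hmem => hx (support_fderiv_subset ℝ hmem)
    simp [hBdef, h0, h1]
  have hSvolcs : HasCompactSupport fun x => S x * vol x := by
    refine HasCompactSupport.intro hω'c fun x hx => ?_
    have : S x = 0 := by
      simp only [hSdef]
      refine Finset.sum_eq_zero fun l _ => Finset.sum_eq_zero fun k _ => ?_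
      rw [hB0 l x hx]; ring
    rw [this, zero_mul]
  have hJ1int : Integrable fun x => S x * vol x :=
    (hSc.mul hvol).integrable_of_hasCompactSupport hSvolcs
  have hω2cs : HasCompactSupport fun x => (ω' x) ^ 2 * vol x := by
    refine HasCompactSupport.intro hω'c fun x hx => ?_
    rw [image_eq_zero_of_notMem_tsupport hx]; ring
  have hJ2int : Integrable fun x => (ω' x) ^ 2 * vol x :=
    (((hω'.continuous).pow 2).mul hvol).integrable_of_hasCompactSupport hω2cs
  -- 1d integrability
  have hα2int : Integrable (fun t => (α t) ^ 2) (volume.restrict (Set.Iic (0 : ℝ))) := by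
    refine (((hα.continuous).pow 2).integrable_of_hasCompactSupport ?_).restrict
    exact (hαc.comp_left (g := fun y : ℝ => y ^ 2) (by simp) :)
  have hAcs : HasCompactSupport A := by
    refine HasCompactSupport.intro hαc fun t ht => ?_
    have h0 : α t = 0 := image_eq_zero_of_notMem_tsupport ht
    have h1 : deriv α t = 0 :=
      Function.notMem_support.mp fun hmem => ht (support_deriv_subset hmem)
    simp [hAdef, h0, h1]
  have hAc : Continuous A :=
    ((continuous_const.mul ((continuous_const.mul (hα.continuous_deriv (by simp))).neg.add
      hα.continuous)).pow 2)
  have hAint : Integrable A (volume.restrict (Set.Iic (0 : ℝ))) :=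
    (hAc.integrable_of_hasCompactSupport hAcs).restrict
  -- pointwise simplification of the inner integrand
  have hpt : ∀ (x : EuclideanSpace ℝ (Fin d)) (t : ℝ),
      ((∑ l, ∑ k, Ginv x l k *
          (h * fderiv ℝ (fun y => ω' y * α t) x (EuclideanSpace.single l 1)
            + fderiv ℝ f' x (EuclideanSpace.single l 1) * (ω' x * α t)) *
          (h * fderiv ℝ (fun y => ω' y * α t) x (EuclideanSpace.single k 1)
            + fderiv ℝ f' x (EuclideanSpace.single k 1) * (ω' x * α t))) * c⁻¹
        + (c⁻¹ * (-(h * deriv (fun s => ω' x * α s) t) + ω' x * α t)) ^ 2)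
      = (α t) ^ 2 * (S x * c⁻¹) + (ω' x) ^ 2 * A t := by
    intro x t
    have h1 : fderiv ℝ (fun y => ω' y * α t) x = α t • fderiv ℝ ω' x :=
      fderiv_mul_const ((hω'.differentiable (by simp)) x) (α t)
    have h2 : deriv (fun s => ω' x * α s) t = ω' x * deriv α t :=
      deriv_const_mul_field _
    rw [h1, h2]
    simp only [ContinuousLinearMap.smul_apply, smul_eq_mul]
    have hsum : (∑ l, ∑ k, Ginv x l k *
        (h * (α t * fderiv ℝ ω' x (EuclideanSpace.single l 1))
          + fderiv ℝ f' x (EuclideanSpace.single l 1) * (ω' x * α t)) *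
        (h * (α t * fderiv ℝ ω' x (EuclideanSpace.single k 1))
          + fderiv ℝ f' x (EuclideanSpace.single k 1) * (ω' x * α t)))
        = (α t) ^ 2 * S x := by
      rw [hSdef, Finset.mul_sum]
      refine Finset.sum_congr rfl fun l _ => ?_
      rw [Finset.mul_sum]
      refine Finset.sum_congr rfl fun k _ => ?_
      simp only [hBdef]; ring
    rw [hsum, hAdef]
    ring
  -- rewrite the outer integrand
  have hfun : (fun x => (∫ t in Set.Iic (0 : ℝ),
      ((∑ l, ∑ k, Ginv x l k *
          (h * fderiv ℝ (fun y => ω' y * α t) x (EuclideanSpace.single l 1)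
            + fderiv ℝ f' x (EuclideanSpace.single l 1) * (ω' x * α t)) *
          (h * fderiv ℝ (fun y => ω' y * α t) x (EuclideanSpace.single k 1)
            + fderiv ℝ f' x (EuclideanSpace.single k 1) * (ω' x * α t))) * c⁻¹
        + (c⁻¹ * (-(h * deriv (fun s => ω' x * α s) t) + ω' x * α t)) ^ 2)
      * (vol x * Real.sqrt c)))
      = fun x => (S x * vol x) * (c⁻¹ * I₁ * Real.sqrt c)
          + ((ω' x) ^ 2 * vol x) * (I₂ * Real.sqrt c) := by
    funext x
    rw [show (fun t => ((∑ l, ∑ k, Ginv x l k *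
          (h * fderiv ℝ (fun y => ω' y * α t) x (EuclideanSpace.single l 1)
            + fderiv ℝ f' x (EuclideanSpace.single l 1) * (ω' x * α t)) *
          (h * fderiv ℝ (fun y => ω' y * α t) x (EuclideanSpace.single k 1)
            + fderiv ℝ f' x (EuclideanSpace.single k 1) * (ω' x * α t))) * c⁻¹
        + (c⁻¹ * (-(h * deriv (fun s => ω' x * α s) t) + ω' x * α t)) ^ 2)
      * (vol x * Real.sqrt c))
      = fun t => (α t) ^ 2 * (S x * c⁻¹ * (vol x * Real.sqrt c))
          + A t * ((ω' x) ^ 2 * (vol x * Real.sqrt c)) from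
        funext fun t => by rw [hpt x t]; ring]
    rw [integral_add (hα2int.mul_const _) (hAint.mul_const _),
      integral_mul_const, integral_mul_const, ← hI1def, ← hI2def]
    ring
  rw [hfun]
  -- split the outer integral
  rw [integral_add (hJ1int.mul_const _) (hJ2int.mul_const _),
    integral_mul_const, integral_mul_const]
  -- rewrite the right-hand side 1d integrals
  have hR1 : (∫ t in Set.Iic (0 : ℝ), (α t) ^ 2 * c⁻¹ * Real.sqrt c)
      = I₁ * (c⁻¹ * Real.sqrt c) := by
    rw [hI1def, ← integral_mul_const]
    exact integral_congr_ae (Filter.Eventually.of_forall fun t => by ring)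
  have hR2 : (∫ t in Set.Iic (0 : ℝ),
      (c⁻¹ * (-(h * deriv α t) + α t)) ^ 2 * Real.sqrt c) = I₂ * Real.sqrt c := by
    rw [hI2def, ← integral_mul_const]
  have hRS : (∫ x, (∑ l, ∑ k, Ginv x l k *
        (h * fderiv ℝ ω' x (EuclideanSpace.single l 1)
          + fderiv ℝ f' x (EuclideanSpace.single l 1) * ω' x) *
        (h * fderiv ℝ ω' x (EuclideanSpace.single k 1)
          + fderiv ℝ f' x (EuclideanSpace.single k 1) * ω' x)) * vol x)
      = ∫ x, S x * vol x := rfl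
  rw [hR1, hR2, hRS]
  ring
end
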